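/- Let R be a commutative unitary ring with Erdős-Burgess constant I(S_R) = n finite. Then R has at most n − 1 maximal ideals of index greater than two. Equivalently: if M_1,...,M_n are n distinct maximal ideals of R each with |R/M_i| > 2 finite, then there exist elements a_1,...,a_n of R forming an idempotent-product free sequence, contradicting I(S_R) = n. -/

import Mathlib

/-- Product of the nonempty list `a :: l` in a semigroup. -/
def sprod {α : Type*} [Mul α] (a : α) (l : List α) : α := l.foldl (· * ·) a

/-- A list is idempotent-product free if no nonempty sublist has idempotent product. -/
def IdemProdFree {α : Type*} [Mul α] (l : List α) : Prop :=
  ∀ (a : α) (t : List α), (a :: t).Sublist l → ¬ IsIdempotentElem (sprod a t)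

/-- The Erdős–Burgess constant of a (commutative) semigroup, as an extended natural:
the supremum of `|T| + 1` over all idempotent-product free sequences `T`. -/
noncomputable def EB (α : Type*) [Mul α] : ℕ∞ :=
  ⨆ l ∈ {l : List α | IdemProdFree l}, ((l.length : ℕ∞) + 1)

/-!
Pick, for each maximal ideal `Mᵢ`, a non-idempotent `bᵢ` of the field `R/Mᵢ` (one exists as
`R/Mᵢ` has an element other than `0` and `1`), and by the Chinese remainder theorem an `aᵢ ∈ R`
with `aᵢ ≡ bᵢ (mod Mᵢ)` and `aᵢ ≡ 1 (mod Mⱼ)` for `j ≠ i`. A nonempty subproduct of the `aᵢ`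
starting at `aᵢ` reduces to `bᵢ` modulo `Mᵢ`, so it is not idempotent. Thus `a₁, …, aₙ` is an
idempotent-product free sequence of length `n`, forcing `EB R ≥ n + 1`.
-/

open Function

lemma sprod_eq_prod {α : Type*} [Monoid α] (a : α) (t : List α) :
    sprod a t = (a :: t).prod := by
  rw [List.prod_eq_foldl, List.foldl_cons, one_mul]; rfl

lemma IdemProdFree.length_add_one_le_EB {α : Type*} [Mul α] {l : List α}
    (hl : IdemProdFree l) : (l.length : ℕ∞) + 1 ≤ EB α :=
  le_iSup₂ (f := fun l (_ : l ∈ {l : List α | IdemProdFree l}) => (l.length : ℕ∞) + 1) l hl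

lemma exists_not_isIdempotentElem {M₀ : Type*} [MonoidWithZero M₀] [IsLeftCancelMulZero M₀]
    (h : 2 < Nat.card M₀) : ∃ x : M₀, ¬IsIdempotentElem x := by
  by_contra! hidem
  have hsurj : Surjective fun b : Bool => if b then (1 : M₀) else 0 := fun x => by
    rcases IsIdempotentElem.iff_eq_zero_or_one.mp (hidem x) with rfl | rfl
    exacts [⟨false, rfl⟩, ⟨true, rfl⟩]
  have := Nat.card_le_card_of_surjective _ hsurj
  rw [Nat.card_eq_fintype_card (α := Bool), Fintype.card_bool] at this
  omega

theorem idemProdFree_ofFn_of_separating {α : Type*} [Monoid α] {n : ℕ} {β : Fin n → Type*}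
    [∀ i, Monoid (β i)] (f : ∀ i, α →* β i) (a : Fin n → α)
    (hne : ∀ i, ¬IsIdempotentElem (f i (a i))) (hone : ∀ i j, j ≠ i → f j (a i) = 1) :
    IdemProdFree (List.ofFn a) := by
  have ha : Injective a := fun i j hij => by
    by_contra hij'
    exact hne j (by rw [← hij, hone i j (Ne.symm hij')]; exact .one)
  intro x t hsub hidem
  obtain ⟨i, rfl⟩ := List.mem_ofFn.mp (hsub.subset List.mem_cons_self)
  have hnd := List.nodup_cons.mp (hsub.nodup (List.nodup_ofFn.mpr ha))
  have ht : ∀ y ∈ t, f i y = 1 := fun y hy => by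
    obtain ⟨j, rfl⟩ := List.mem_ofFn.mp (hsub.subset (List.mem_cons_of_mem _ hy))
    exact hone j i fun hij => hnd.1 (hij ▸ hy)
  have hprod : f i (sprod (a i) t) = f i (a i) := by
    rw [sprod_eq_prod, List.prod_cons, map_mul, map_list_prod,
      List.prod_eq_one (by simpa using ht), mul_one]
  exact hne i (hprod ▸ hidem.map (f i))

lemma Ideal.exists_mk_eq_and_mk_eq_one {R ι : Type*} [CommRing R] [Finite ι] {I : ι → Ideal R}
    (hI : Pairwise (IsCoprime on I)) (i : ι) (b : R ⧸ I i) :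
    ∃ a : R, Ideal.Quotient.mk (I i) a = b ∧ ∀ j ≠ i, Ideal.Quotient.mk (I j) a = 1 := by
  classical
  obtain ⟨a, ha⟩ := Ideal.pi_quotient_surjective hI (Pi.mulSingle i b)
  exact ⟨a, by simpa using ha i, fun j hj => by simpa [hj] using ha j⟩

theorem exists_idemProdFree_length_eq {R : Type*} [CommRing R] {n : ℕ} (M : Fin n → Ideal R)
    (hinj : Injective M) (hmax : ∀ i, (M i).IsMaximal)
    (hcard : ∀ i, 2 < Nat.card (R ⧸ M i)) : ∃ l : List R, l.length = n ∧ IdemProdFree l := by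
  have hcop : Pairwise (IsCoprime on M) := fun i j hij =>
    Ideal.isCoprime_iff_sup_eq.mpr ((hmax i).coprime_of_ne (hmax j) (hinj.ne hij))
  have hb (i : Fin n) : ∃ b : R ⧸ M i, ¬IsIdempotentElem b :=
    have := hmax i
    exists_not_isIdempotentElem (hcard i)
  choose b hb using hb
  choose a ha hone using fun i => Ideal.exists_mk_eq_and_mk_eq_one hcop i (b i)
  refine ⟨List.ofFn a, List.length_ofFn, idemProdFree_ofFn_of_separating
    (fun i => (Ideal.Quotient.mk (M i) : R →* R ⧸ M i)) a (fun i => ?_) hone⟩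
  simpa [ha] using hb i

theorem stmt_11_general (R : Type*) [CommRing R] (n : ℕ) (h : EB R = (n : ℕ∞))
    (M : Fin n → Ideal R) (hinj : Function.Injective M)
    (hmax : ∀ i, (M i).IsMaximal)
    (hcard : ∀ i, 2 < Nat.card (R ⧸ M i)) : False := by
  obtain ⟨l, hlen, hl⟩ := exists_idemProdFree_length_eq M hinj hmax hcard
  have hle := hl.length_add_one_le_EB
  rw [hlen, h] at hle
  exact lt_irrefl _ ((ENat.add_one_le_iff (ENat.natCast_ne_top n)).mp hle)

theorem stmt_11 (R : Type*) [CommRing R] (n : ℕ) (h : EB R = (n : ℕ∞))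
    (M : Fin n → Ideal R) (hinj : Function.Injective M)
    (hmax : ∀ i, (M i).IsMaximal)
    (hfin : ∀ i, Finite (R ⧸ M i))
    (hcard : ∀ i, 2 < Nat.card (R ⧸ M i)) : False :=
  stmt_11_general R n h M hinj hmax hcard
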